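/- Let ≡ be a congruence relation on the nine-element lattice L₉ = {A, B, C, D, E, F, U, T, S} (with notation as in the definition of L₉). If ≡ is not the equality relation, then E ≡ D. -/

import Mathlib

/-! ## The lattices `L₅` and `L₉` -/

/-- The pentagon lattice `L₅`. -/
inductive L5 : Type
  | E | S | U | A | F
  deriving DecidableEq

instance : Fintype L5 :=
  ⟨⟨[L5.E, L5.S, L5.U, L5.A, L5.F], by decide⟩, fun x => by cases x <;> decide⟩

namespace L5

/-- The order relation of `L₅`. -/
def le : L5 → L5 → Bool
  | E, _ => true
  | _, F => true
  | S, S => true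
  | S, A => true
  | U, U => true
  | A, A => true
  | _, _ => false

/-- Joins in `L₅`. -/
def sup : L5 → L5 → L5
  | E, x => x
  | x, E => x
  | F, _ | _, F => F
  | S, S => S
  | S, A | A, S => A
  | S, U | U, S => F
  | U, U => U
  | U, A | A, U => F
  | A, A => A

/-- Meets in `L₅`. -/
def inf : L5 → L5 → L5
  | E, _ | _, E => E
  | F, x => x
  | x, F => x
  | S, S => S
  | S, A | A, S => S
  | S, U | U, S => E
  | U, U => U
  | U, A | A, U => E
  | A, A => A

instance : LE L5 := ⟨fun a b => le a b = true⟩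

instance : DecidableRel ((· ≤ ·) : L5 → L5 → Prop) := fun a b =>
  inferInstanceAs (Decidable (le a b = true))

instance : PartialOrder L5 where
  le := (· ≤ ·)
  le_refl := by decide
  le_trans := by decide
  le_antisymm := by decide

instance : Lattice L5 where
  sup := sup
  le_sup_left := by decide
  le_sup_right := by decide
  sup_le := by decide
  inf := inf
  inf_le_left := by decide
  inf_le_right := by decide
  le_inf := by decide

end L5

/-- The nine-element lattice `L₉ = L₁₀ \ {V}`, where `L₁₀` is the subgroup lattice
of the dihedral group of order `8`.  It has least element `E`, greatest element `F`,
coatoms `A`, `B`, `C`, an element `D` with `E < D < A, B, C`, and atoms `S`, `T`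
(below `A`) and `U` (below `C`). -/
inductive L9 : Type
  | E | S | T | D | U | A | B | C | F
  deriving DecidableEq

instance : Fintype L9 :=
  ⟨⟨[L9.E, L9.S, L9.T, L9.D, L9.U, L9.A, L9.B, L9.C, L9.F], by decide⟩,
    fun x => by cases x <;> decide⟩

namespace L9

/-- The order relation of `L₉`. -/
def le : L9 → L9 → Bool
  | E, _ => true
  | _, F => true
  | S, S => true
  | S, A => true
  | T, T => true
  | T, A => true
  | D, D => true
  | D, A => true
  | D, B => true
  | D, C => true
  | U, U => true
  | U, C => true
  | A, A => true
  | B, B => true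
  | C, C => true
  | _, _ => false

/-- Joins in `L₉`. -/
def sup : L9 → L9 → L9
  | E, x => x
  | x, E => x
  | F, _ | _, F => F
  | S, S => S
  | S, T | T, S => A
  | S, D | D, S => A
  | S, U | U, S => F
  | S, A | A, S => A
  | S, B | B, S => F
  | S, C | C, S => F
  | T, T => T
  | T, D | D, T => A
  | T, U | U, T => F
  | T, A | A, T => A
  | T, B | B, T => F
  | T, C | C, T => F
  | D, D => D
  | D, U | U, D => C
  | D, A | A, D => A
  | D, B | B, D => B
  | D, C | C, D => C
  | U, U => U
  | U, A | A, U => F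
  | U, B | B, U => F
  | U, C | C, U => C
  | A, A => A
  | A, B | B, A => F
  | A, C | C, A => F
  | B, B => B
  | B, C | C, B => F
  | C, C => C

/-- Meets in `L₉`. -/
def inf : L9 → L9 → L9
  | E, _ | _, E => E
  | F, x => x
  | x, F => x
  | S, S => S
  | S, T | T, S => E
  | S, D | D, S => E
  | S, U | U, S => E
  | S, A | A, S => S
  | S, B | B, S => E
  | S, C | C, S => E
  | T, T => T
  | T, D | D, T => E
  | T, U | U, T => E
  | T, A | A, T => T
  | T, B | B, T => E
  | T, C | C, T => E
  | D, D => D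
  | D, U | U, D => E
  | D, A | A, D => D
  | D, B | B, D => D
  | D, C | C, D => D
  | U, U => U
  | U, A | A, U => E
  | U, B | B, U => E
  | U, C | C, U => U
  | A, A => A
  | A, B | B, A => D
  | A, C | C, A => D
  | B, B => B
  | B, C | C, B => D
  | C, C => C

instance : LE L9 := ⟨fun a b => le a b = true⟩

instance : DecidableRel ((· ≤ ·) : L9 → L9 → Prop) := fun a b =>
  inferInstanceAs (Decidable (le a b = true))

instance : PartialOrder L9 where
  le := (· ≤ ·)
  le_refl := by decide
  le_trans := by decide
  le_antisymm := by decide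

instance : Lattice L9 where
  sup := sup
  le_sup_left := by decide
  le_sup_right := by decide
  sup_le := by decide
  inf := inf
  inf_le_left := by decide
  inf_le_right := by decide
  le_inf := by decide

end L9

/-- A group `G` is `L`-free (for a lattice `L`) if its subgroup lattice has no
sublattice isomorphic to `L`, i.e. there is no injective map from `L` to the
subgroups of `G` carrying joins to joins and meets to intersections. -/
def IsLatticeFree (L : Type*) [Lattice L] (G : Type*) [Group G] : Prop :=
  ¬ ∃ f : L → Subgroup G, Function.Injective f ∧
      (∀ a b : L, f (a ⊔ b) = f a ⊔ f b) ∧ (∀ a b : L, f (a ⊓ b) = f a ⊓ f b)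

/-- A group is `L₉`-free if its subgroup lattice has no sublattice isomorphic to `L₉`. -/
abbrev IsL9Free (G : Type*) [Group G] : Prop := IsLatticeFree L9 G

section GroupDefs

variable {G : Type*} [Group G]

/-- The subgroup `X` centralises the subgroup `Y` elementwise. -/
def Centralises (X Y : Subgroup G) : Prop := ∀ x ∈ X, ∀ y ∈ Y, x * y = y * x

/-- The subgroup `X` normalises the subgroup `Y`, i.e. `Y` is `X`-invariant. -/
def Normalises (X Y : Subgroup G) : Prop := ∀ x ∈ X, ∀ y ∈ Y, x * y * x⁻¹ ∈ Y

/-- The centraliser `C_X(Y)` of `Y` in `X`. -/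
def centIn (X Y : Subgroup G) : Subgroup G := X ⊓ Subgroup.centralizer (Y : Set G)

/-- `Q` acts irreducibly on `P` (by conjugation): `P ≠ 1` and the only
`Q`-invariant subgroups of `P` are `1` and `P`. -/
def ActsIrreduciblyOn (Q P : Subgroup G) : Prop :=
  P ≠ ⊥ ∧ ∀ R : Subgroup G, R ≤ P → Normalises Q R → R = ⊥ ∨ R = P

/-- `Q` induces (possibly trivial) power automorphisms on `P`: every subgroup
of `P` is `Q`-invariant. -/
def InducesPowerAutosOn (Q P : Subgroup G) : Prop :=
  ∀ R : Subgroup G, R ≤ P → Normalises Q R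

/-- The subgroup `P` is abelian. -/
def IsCommSubgroup (P : Subgroup G) : Prop := ∀ x ∈ P, ∀ y ∈ P, x * y = y * x

/-- The subgroup `P` is elementary abelian. -/
def IsElemAbelian (P : Subgroup G) : Prop :=
  IsCommSubgroup P ∧ ∃ p : ℕ, p.Prime ∧ ∀ x ∈ P, x ^ p = 1

/-- `Q` is a Sylow `p`-subgroup of `B` (both subgroups of the ambient group `G`):
a `p`-subgroup of `B` whose index in `B` is prime to `p`. -/
def IsSylowIn (p : ℕ) (Q B : Subgroup G) : Prop :=
  Q ≤ B ∧ IsPGroup p ↥Q ∧ ¬ p ∣ Q.relIndex B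

/-- `Q` is a `π`-group: all primes dividing its order lie in `π`. -/
def IsPiSubgroup (π : Set ℕ) (Q : Subgroup G) : Prop :=
  ∀ p : ℕ, p.Prime → p ∣ Nat.card ↥Q → p ∈ π

/-- `O_p(L)`: the largest normal `p`-subgroup of `L`, as a subgroup of the ambient group. -/
def pCoreIn (p : ℕ) (L : Subgroup G) : Subgroup G :=
  ⨆ Q ∈ {Q : Subgroup G | Q ≤ L ∧ IsPGroup p ↥Q ∧ Normalises L Q}, Q

/-- `O_π(L)`: the largest normal `π`-subgroup of `L`, as a subgroup of the ambient group. -/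
def piCoreIn (π : Set ℕ) (L : Subgroup G) : Subgroup G :=
  ⨆ Q ∈ {Q : Subgroup G | Q ≤ L ∧ IsPiSubgroup π Q ∧ Normalises L Q}, Q

end GroupDefs

/-- A batten: a cyclic group of prime power order, a group isomorphic to `Q₈`, or
a product `QR` with `Q` normal of prime order `q`, `R` a cyclic `p`-group with
`p ≠ q` and `C_R(Q) = Φ(R) ≠ 1`. -/
def IsBattenGrp (B : Type*) [Group B] : Prop :=
  (IsCyclic B ∧ ∃ p : ℕ, p.Prime ∧ IsPGroup p B) ∨
  Nonempty (B ≃* QuaternionGroup 2) ∨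
  (∃ (Q R : Subgroup B) (q p : ℕ), q.Prime ∧ p.Prime ∧ p ≠ q ∧
    Q.Normal ∧ Nat.card ↥Q = q ∧ IsCyclic ↥R ∧ IsPGroup p ↥R ∧
    Q ⊔ R = ⊤ ∧
    R ⊓ Subgroup.centralizer (Q : Set B) = (frattini ↥R).map R.subtype ∧
    frattini ↥R ≠ ⊥)

section Batten

variable {G : Type*} [Group G]

/-- `S` is an internal decomposition of `K ≤ G` as a direct product of battens
of pairwise coprime orders (the members of `S` are the battens of `K`). -/
def IsBattenDecomp (K : Subgroup G) (S : Finset (Subgroup G)) : Prop :=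
  (∀ B ∈ S, B ≤ K ∧ Normalises K B ∧ IsBattenGrp ↥B) ∧
  (∀ B ∈ S, ∀ B' ∈ S, B ≠ B' → Nat.Coprime (Nat.card ↥B) (Nat.card ↥B')) ∧
  S.sup id = K ∧ (∏ B ∈ S, Nat.card ↥B) = Nat.card ↥K

/-- `K ≤ G` is a batten group. -/
def IsBattenGroupSub (K : Subgroup G) : Prop :=
  ∃ S : Finset (Subgroup G), IsBattenDecomp K S

/-- A cyclic `q`-group `Q` acts on the `p`-group `P` avoiding `L₉` (types
(std), (cent), (hamil)). -/
def AvoidsL9CyclicQ (Q P : Subgroup G) : Prop :=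
  IsCyclic ↥Q ∧ (∃ q : ℕ, q.Prime ∧ IsPGroup q ↥Q) ∧
  (∃ p : ℕ, p.Prime ∧ IsPGroup p ↥P) ∧
  Nat.Coprime (Nat.card ↥Q) (Nat.card ↥P) ∧ Normalises Q P ∧
  ( -- (std)
    (P = ⁅P, Q⁆ ∧ IsElemAbelian P ∧
      ∀ U : Subgroup G, U ≤ Q → ActsIrreduciblyOn U P ∨ InducesPowerAutosOn U P) ∨
    -- (cent)
    (IsElemAbelian ⁅P, Q⁆ ∧
      (∀ U : Subgroup G, U ≤ Q → ActsIrreduciblyOn U ⁅P, Q⁆ ∨ Centralises U ⁅P, Q⁆) ∧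
      IsCommSubgroup P ∧ centIn P Q ≠ ⊥ ∧ IsCyclic ↥(centIn P Q) ∧
      IsPGroup 2 ↥(centIn P Q)) ∨
    -- (hamil)
    (Nonempty (↥⁅P, Q⁆ ≃* QuaternionGroup 2) ∧
      (∃ I : Subgroup G, I ≤ P ∧ Nat.card ↥I ≤ 2 ∧ ⁅P, Q⁆ ⊓ I = ⊥ ∧ ⁅P, Q⁆ ⊔ I = P ∧
        Centralises ⁅P, Q⁆ I) ∧
      IsPGroup 3 ↥Q ∧
      Nonempty ((↥(⁅P, Q⁆ ⊔ Q) ⧸ Subgroup.center ↥(⁅P, Q⁆ ⊔ Q)) ≃*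
        ↥(alternatingGroup (Fin 4)))) )

/-- A group `Q ≅ Q₈` acts on the `p`-group `P` avoiding `L₉`. -/
def AvoidsL9Q8 (Q P : Subgroup G) : Prop :=
  Nonempty (↥Q ≃* QuaternionGroup 2) ∧ Normalises Q P ∧
  ∃ p : ℕ, p.Prime ∧ IsPGroup p ↥P ∧ p % 4 = 3 ∧ Nat.card ↥P = p ^ 2 ∧
    (∀ x ∈ Q, (∀ y ∈ P, x * y * x⁻¹ = y) → x = 1)

/-- A non-nilpotent batten `B` acts on the `p`-group `P` avoiding `L₉`
(types (Cy) and (NN)); here `𝓑(B)` is the unique normal Sylow subgroup of `B`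
(of prime order `q`) and `Z(B)` is the centre of `B`. -/
def AvoidsL9NN (B P : Subgroup G) : Prop :=
  IsBattenGrp ↥B ∧ ¬ Group.IsNilpotent ↥B ∧ Normalises B P ∧
  Nat.Coprime (Nat.card ↥B) (Nat.card ↥P) ∧
  ∃ p : ℕ, p.Prime ∧ IsPGroup p ↥P ∧
    ⁅P, centIn B B⁆ ≠ ⊥ ∧
    ∃ q : ℕ, q.Prime ∧ ∃ QB : Subgroup G, Normalises B QB ∧ IsSylowIn q QB B ∧
      Nat.card ↥QB = q ∧
      ( -- (Cy)
        (⁅P, QB⁆ = ⊥ ∧ ∀ r : ℕ, r.Prime → r ≠ q → r ∣ Nat.card ↥B →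
          ∀ R : Subgroup G, IsSylowIn r R B → AvoidsL9CyclicQ R P) ∨
        -- (NN)
        (IsElemAbelian P ∧ Nat.card ↥P = p ^ ((QB ⊔ centIn B B).relIndex B) ∧
          (∀ r : ℕ, r.Prime → r ∣ Nat.card ↥B →
            ∀ R : Subgroup G, IsSylowIn r R B → ActsIrreduciblyOn R P) ∧
          InducesPowerAutosOn (centIn B B) P) )

/-- A batten `B` acts on the `p`-group `P` avoiding `L₉`. -/
def AvoidsL9Batten (B P : Subgroup G) : Prop :=
  AvoidsL9CyclicQ B P ∨ AvoidsL9Q8 B P ∨ AvoidsL9NN B P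

/-- A cyclic group `L` acts on the `p`-group `P` avoiding `L₉`: `[P,L] ≠ 1` and
every primary component of `L` centralises `P` or acts on `P` avoiding `L₉`. -/
def AvoidsL9CyclicGroup (L P : Subgroup G) : Prop :=
  IsCyclic ↥L ∧ ⁅P, L⁆ ≠ ⊥ ∧
  ∀ q : ℕ, q.Prime → q ∣ Nat.card ↥L →
    Centralises (pCoreIn q L) P ∨ AvoidsL9CyclicQ (pCoreIn q L) P

/-- The set `π := {q ∈ π(L) | C_{O_q(L)}(H) < C_{O_q(L)}(J)}`. -/
def piHJ (L H J : Subgroup G) : Set ℕ :=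
  {q : ℕ | q.Prime ∧ q ∣ Nat.card ↥L ∧
    centIn (pCoreIn q L) H < centIn (pCoreIn q L) J}

/-- `G` belongs to the class `𝔏` with type `(N, K)`, where `S` is the set of
battens of `K`. -/
def FrakLType (N K : Subgroup G) (S : Finset (Subgroup G)) : Prop :=
  -- (𝔏1)
  N.Normal ∧ Group.IsNilpotent ↥N ∧ Nat.Coprime (Nat.card ↥N) N.index ∧
  (∀ p : ℕ, p.Prime → ∀ P : Subgroup G, IsSylowIn p P N →
    IsModularLattice (Subgroup ↥P)) ∧
  N ⊓ K = ⊥ ∧ N ⊔ K = ⊤ ∧ IsBattenDecomp K S ∧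
  -- (𝔏2)
  (∀ p : ℕ, p.Prime → p ∣ Nat.card ↥N → ∀ B ∈ S,
    Centralises B (pCoreIn p N) ∨ AvoidsL9Batten B (pCoreIn p N)) ∧
  -- (𝔏3)
  (∀ q : ℕ, q.Prime → ∀ Q : Subgroup G, IsSylowIn q Q K →
    ∀ p r : ℕ, p.Prime → r.Prime → p ≠ r →
      ¬ Centralises Q (pCoreIn p N) → ¬ Centralises Q (pCoreIn r N) →
      centIn Q (pCoreIn p N) ≠ centIn Q (pCoreIn r N)) ∧
  -- (𝔏4)
  (∀ H L J : Subgroup G, H ≤ N → IsCommSubgroup H →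
    (∀ p : ℕ, p.Prime → ∀ P : Subgroup G, IsSylowIn p P H → P ≠ ⊥ → ¬ IsCyclic ↥P) →
    L ≤ K → IsCyclic ↥L → InducesPowerAutosOn L H →
    (∀ q : ℕ, q.Prime → (q ∣ Nat.card ↥L ↔ q ∣ (centIn L H).relIndex L)) →
    J ≠ ⊥ → J ≤ N → Normalises L J → IsCommSubgroup J →
    Nat.Coprime (Nat.card ↥H) (Nat.card ↥J) → Centralises H J →
    centIn H (centIn L J) = ⊥ →
    ∃ g ∈ H ⊔ J, g ≠ 1 ∧
      ((∀ x ∈ piCoreIn (piHJ L H J) L, g * x = x * g) ∨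
       (∀ x ∈ piCoreIn {q : ℕ | q.Prime ∧ q ∉ piHJ L H J} L, g * x = x * g)))

end Batten

/-- The class `𝔏`. -/
def InFrakL (G : Type*) [Group G] : Prop :=
  ∃ (N K : Subgroup G) (S : Finset (Subgroup G)), FrakLType N K S

/-! Congruence classes are convex, so a nontrivial congruence of a finite lattice collapses some
covering pair `x ⋖ y`; every covering pair of `L₉` is carried onto `E ⋖ D` by a few meets
and joins with fixed elements. -/

namespace LatticeCon

variable {α : Type*} [Lattice α] (c : LatticeCon α) {a b x y z : α}

lemma r_inf_right (h : c.r a b) (z : α) : c.r (a ⊓ z) (b ⊓ z) :=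
  c.inf h (c.refl z)

lemma r_sup_right (h : c.r a b) (z : α) : c.r (a ⊔ z) (b ⊔ z) :=
  c.sup h (c.refl z)

lemma r_of_le_of_le (h : c.r x y) (hxz : x ≤ z) (hzy : z ≤ y) : c.r x z := by
  have hzy' : c.r z y := by simpa [sup_eq_right.2 hxz, sup_eq_left.2 hzy] using c.r_sup_right h z
  exact c.trans h (c.symm hzy')

lemma exists_covBy_r [IsStronglyAtomic α] (h : c.r a b) (hne : a ≠ b) :
    ∃ x y, x ⋖ y ∧ c.r x y := by
  obtain ⟨y, hcov, hle⟩ := exists_covBy_le_of_lt (inf_lt_sup.2 hne)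
  exact ⟨_, y, hcov, c.r_of_le_of_le (c.r_inf_sup_iff.2 h) hcov.le hle⟩

end LatticeCon

namespace L9

lemma covBy_iff {x y : L9} : x ⋖ y ↔
    (x = E ∧ y = S) ∨ (x = E ∧ y = T) ∨ (x = E ∧ y = D) ∨ (x = E ∧ y = U) ∨
    (x = S ∧ y = A) ∨ (x = T ∧ y = A) ∨ (x = U ∧ y = C) ∨
    (x = D ∧ y = A) ∨ (x = D ∧ y = B) ∨ (x = D ∧ y = C) ∨
    (x = A ∧ y = F) ∨ (x = B ∧ y = F) ∨ (x = C ∧ y = F) := by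
  unfold CovBy
  simp only [lt_iff_le_not_ge]
  revert x y
  decide

lemma r_E_D_of_covBy (c : LatticeCon L9) {x y : L9} (hxy : x ⋖ y) (h : c.r x y) : c.r E D := by
  have of_E_S (h : c.r E S) : c.r E D := c.r_inf_right (c.r_sup_right h T) D
  have of_E_U (h : c.r E U) : c.r E D := c.r_inf_right (c.r_sup_right h S) D
  rcases covBy_iff.1 hxy with
    ⟨rfl, rfl⟩ | ⟨rfl, rfl⟩ | ⟨rfl, rfl⟩ | ⟨rfl, rfl⟩ | ⟨rfl, rfl⟩ | ⟨rfl, rfl⟩ | ⟨rfl, rfl⟩ |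
    ⟨rfl, rfl⟩ | ⟨rfl, rfl⟩ | ⟨rfl, rfl⟩ | ⟨rfl, rfl⟩ | ⟨rfl, rfl⟩ | ⟨rfl, rfl⟩
  · exact of_E_S h
  · exact c.r_inf_right (c.r_sup_right h S) D
  · exact h
  · exact of_E_U h
  · exact c.r_inf_right h D
  · exact c.r_inf_right h D
  · exact c.r_inf_right h D
  · exact of_E_S (c.r_inf_right h S)
  · exact of_E_U (c.r_inf_right (c.r_sup_right h S) U)
  · exact of_E_U (c.r_inf_right h U)
  · exact of_E_U (c.r_inf_right h U)
  · exact of_E_S (c.r_inf_right h S)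
  · exact of_E_S (c.r_inf_right h S)

end L9

/-- **Lemma.** If a congruence relation on the lattice `L₉` is not the equality
relation, then `E ≡ D`. -/
theorem congruence_L9 (r : L9 → L9 → Prop) (hequiv : Equivalence r)
    (hsup : ∀ a b c d : L9, r a b → r c d → r (a ⊔ c) (b ⊔ d))
    (hinf : ∀ a b c d : L9, r a b → r c d → r (a ⊓ c) (b ⊓ d))
    (hne : ¬ ∀ a b : L9, r a b ↔ a = b) :
    r L9.E L9.D := by
  let c : LatticeCon L9 :=
    { r, iseqv := hequiv, inf := hinf _ _ _ _, sup := hsup _ _ _ _ }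
  obtain ⟨a, b, hab, hne⟩ : ∃ a b, r a b ∧ a ≠ b := by
    push Not at hne
    obtain ⟨a, b, ⟨hab, hne⟩ | ⟨hnr, rfl⟩⟩ := hne
    · exact ⟨a, b, hab, hne⟩
    · exact absurd (hequiv.refl a) hnr
  obtain ⟨x, y, hxy, hr⟩ := c.exists_covBy_r hab hne
  exact L9.r_E_D_of_covBy c hxy hr
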